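/- arXiv:2007.03998 — 3 statements merged into one kernel-verified Lean document; each statement's English description precedes it below -/
import Mathlib

section
/- Let N be an odd squarefree integer with ω(N) ≥ 8. Then (10/(3π)) · ( ∏_{p prime, p ∣ N} (2 + p^{3/4})/(1 + p) + 3 · ∏_{p prime, p ∣ N} (2 + p^{1/2})/(1 + p) ) < 1/12. -/
/-!
For `β ≤ 1` the function `x ↦ (2 + x ^ β) / (1 + x)` decreases on `[1, ∞)`, and for `β ≤ 3/4`
it is at most `1` from `x = 8` on. Since the `i`-th smallest prime factor of the odd number `N`
is at least the `i`-th odd prime, each product over the prime factors of `N` is at most the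
product over the first eight odd primes `3, 5, …, 23`. Rational upper bounds for the powers
make these at most `3/50` and `1/400`, and `π > 3` finishes.
-/

open Finset

namespace Nat

variable {p : ℕ → Prop} [DecidablePred p]

theorem prod_range_count_nth {M : Type*} [CommMonoid M] (g : ℕ → M) (n : ℕ) :
    ∏ i ∈ range (count p n), g (nth p i) = ∏ x ∈ range n with p x, g x := by
  induction n with
  | zero => simp
  | succ n ih =>
    rw [range_add_one, filter_insert, count_succ]
    by_cases hn : p n
    · rw [if_pos hn, if_pos hn, prod_range_succ, nth_count hn, ih,
        prod_insert (by simp), mul_comm]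
    · rw [if_neg hn, if_neg hn, add_zero, ih]

theorem nth_card_le_of_forall_lt {S : Finset ℕ} {a : ℕ} (hS : ∀ x ∈ S, p x ∧ x < a) (ha : p a) :
    nth p #S ≤ a := by
  have hcard : #S < count p (a + 1) := by
    rw [count_succ, if_pos ha, count_eq_card_filter_range, Nat.lt_add_one_iff]
    exact card_le_card fun x hx => by simp [(hS x hx).1, (hS x hx).2]
  exact Nat.lt_add_one_iff.mp (nth_lt_of_lt_count hcard)

variable {R : Type*} [CommSemiring R] [PartialOrder R] [IsOrderedRing R]

theorem prod_le_prod_range_nth (hp : {x | p x}.Infinite) {f : ℕ → R}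
    (hf0 : ∀ x, p x → 0 ≤ f x) (hf : AntitoneOn f {x | p x}) {S : Finset ℕ}
    (hS : ∀ x ∈ S, p x) : ∏ x ∈ S, f x ≤ ∏ i ∈ range #S, f (nth p i) := by
  induction S using Finset.induction_on_max with
  | empty => simp
  | insert a S haS ih =>
    have ha : p a := hS a (mem_insert_self a S)
    have hS' : ∀ x ∈ S, p x := fun x hx => hS x (mem_insert_of_mem hx)
    rw [prod_insert fun h => (haS a h).false, card_insert_of_notMem fun h => (haS a h).false,
      prod_range_succ, mul_comm]
    refine mul_le_mul (ih hS') ?_ (hf0 a ha)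
      (prod_nonneg fun i _ => hf0 _ (nth_mem_of_infinite hp i))
    exact hf (nth_mem_of_infinite hp _) ha
      (nth_card_le_of_forall_lt (fun x hx => ⟨hS' x hx, haS x hx⟩) ha)

theorem prod_le_prod_range_nth_of_le_one (hp : {x | p x}.Infinite) {f : ℕ → R}
    (hf0 : ∀ x, p x → 0 ≤ f x) (hf : AntitoneOn f {x | p x}) {S : Finset ℕ}
    (hS : ∀ x ∈ S, p x) {k : ℕ} (hk : k ≤ #S) (hf1 : ∀ i, k ≤ i → f (nth p i) ≤ 1) :
    ∏ x ∈ S, f x ≤ ∏ i ∈ range k, f (nth p i) := by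
  have hnth0 : ∀ i, 0 ≤ f (nth p i) := fun i => hf0 _ (nth_mem_of_infinite hp i)
  calc ∏ x ∈ S, f x ≤ ∏ i ∈ range #S, f (nth p i) := prod_le_prod_range_nth hp hf0 hf hS
    _ = (∏ i ∈ range k, f (nth p i)) * ∏ i ∈ Ico k #S, f (nth p i) :=
      (prod_range_mul_prod_Ico _ hk).symm
    _ ≤ ∏ i ∈ range k, f (nth p i) :=
      mul_le_of_le_one_right (prod_nonneg fun i _ => hnth0 i)
        (prod_le_one (fun i _ => hnth0 i) fun i hi => hf1 i (mem_Ico.mp hi).1)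

end Nat

theorem antitoneOn_add_rpow_div_one_add {c β : ℝ} (hc : 1 ≤ c) (hβ : β ≤ 1) :
    AntitoneOn (fun x : ℝ => (c + x ^ β) / (1 + x)) (Set.Ici 1) := by
  intro x (hx : 1 ≤ x) y (hy : 1 ≤ y) hxy
  -- write `x ^ β = x * a` and `y ^ β = y * b`; then `b ≤ a ≤ 1` because `β - 1 ≤ 0`
  set a := x ^ (β - 1)
  set b := y ^ (β - 1)
  have hxa : x ^ β = x * a := by
    rw [mul_comm, ← Real.rpow_add_one (by positivity), sub_add_cancel]
  have hyb : y ^ β = y * b := by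
    rw [mul_comm, ← Real.rpow_add_one (by positivity), sub_add_cancel]
  have hba : b ≤ a := Real.rpow_le_rpow_of_nonpos (by positivity) hxy (by linarith)
  have ha1 : a ≤ 1 := Real.rpow_le_one_of_one_le_of_nonpos hx (by linarith)
  have hb0 : 0 ≤ b := by positivity
  show (c + y ^ β) / (1 + y) ≤ (c + x ^ β) / (1 + x)
  rw [div_le_div_iff₀ (by positivity) (by positivity), hxa, hyb]
  nlinarith [mul_le_mul_of_nonneg_left hba (by positivity : 0 ≤ x * y),
    mul_le_mul_of_nonneg_left hba (by positivity : 0 ≤ y),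
    mul_le_mul_of_nonneg_left ha1 (sub_nonneg.2 hxy)]

theorem Real.rpow_le_of_pow_le {x c β : ℝ} {m n : ℕ} (hx : 0 ≤ x) (hc : 0 ≤ c) (hn : n ≠ 0)
    (hβ : β = m / n) (h : x ^ m ≤ c ^ n) : x ^ β ≤ c := by
  calc x ^ β = (x ^ m) ^ (n⁻¹ : ℝ) := by
        rw [hβ, div_eq_mul_inv, Real.rpow_mul hx, Real.rpow_natCast]
    _ ≤ (c ^ n) ^ (n⁻¹ : ℝ) := by gcongr
    _ = c := Real.pow_rpow_inv_natCast hc hn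

theorem infinite_setOf_prime_and_odd : {n : ℕ | n.Prime ∧ Odd n}.Infinite :=
  (Nat.infinite_setOfPred_prime.sdiff (Set.finite_singleton 2)).mono
    fun _ hn => ⟨hn.1, hn.1.odd_of_ne_two hn.2⟩

theorem prod_add_rpow_div_le_prod_first_odd_primes {β : ℝ} (hβ : β ≤ 3 / 4) {S : Finset ℕ}
    (hS : ∀ p ∈ S, p.Prime ∧ Odd p) (hS8 : 8 ≤ #S) :
    ∏ p ∈ S, (2 + (p : ℝ) ^ β) / (1 + p) ≤
      ∏ p ∈ ({3, 5, 7, 11, 13, 17, 19, 23} : Finset ℕ), (2 + (p : ℝ) ^ β) / (1 + p) := by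
  set P : ℕ → Prop := fun n => n.Prime ∧ Odd n
  have hanti : AntitoneOn (fun x : ℝ => (2 + x ^ β) / (1 + x)) (Set.Ici 1) :=
    antitoneOn_add_rpow_div_one_add one_le_two (by linarith)
  have hantiP : AntitoneOn (fun n : ℕ => (2 + (n : ℝ) ^ β) / (1 + n)) {n | P n} :=
    fun m hm n hn hmn => hanti (Set.mem_Ici.2 (Nat.one_le_cast.2 hm.1.one_lt.le))
      (Set.mem_Ici.2 (Nat.one_le_cast.2 hn.1.one_lt.le)) (Nat.cast_le.2 hmn)
  have h8 : (2 + (8 : ℝ) ^ β) / (1 + 8) ≤ 1 := by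
    have h87 : (8 : ℝ) ^ β ≤ 7 :=
      (Real.rpow_le_rpow_of_exponent_le (by norm_num) hβ).trans
        (Real.rpow_le_of_pow_le (m := 3) (n := 4) (by norm_num) (by norm_num) (by norm_num)
          (by norm_num) (by norm_num))
    rw [div_le_one (by norm_num)]
    linarith
  have hle_one : ∀ i, 8 ≤ i → (2 + (Nat.nth P i : ℝ) ^ β) / (1 + Nat.nth P i) ≤ 1 := by
    intro i hi
    have h8i : 8 ≤ Nat.nth P i :=
      hi.trans ((Nat.nth_strictMono infinite_setOf_prime_and_odd).id_le i)
    have h1 : (1 : ℝ) ≤ Nat.nth P i := by exact_mod_cast (by omega : 1 ≤ Nat.nth P i)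
    exact le_trans (hanti (by norm_num : (1 : ℝ) ≤ 8) h1 (by exact_mod_cast h8i)) h8
  calc _ ≤ ∏ i ∈ range 8, (2 + (Nat.nth P i : ℝ) ^ β) / (1 + Nat.nth P i) :=
        Nat.prod_le_prod_range_nth_of_le_one infinite_setOf_prime_and_odd
          (fun _ _ => by positivity) hantiP hS hS8 hle_one
    _ = _ := by
      rw [show 8 = Nat.count P 24 by decide,
        Nat.prod_range_count_nth (fun n : ℕ => (2 + (n : ℝ) ^ β) / (1 + n))]
      rfl

theorem prod_first_odd_primes_rpow_three_quarters_le :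
    ∏ p ∈ ({3, 5, 7, 11, 13, 17, 19, 23} : Finset ℕ), (2 + (p : ℝ) ^ ((3 : ℝ) / 4)) / (1 + p) ≤
      3 / 50 := by
  simp only [mem_insert, mem_singleton, Nat.reduceEqDiff, or_self, not_false_eq_true, prod_insert,
    prod_singleton]
  push_cast
  calc _ ≤ (2 + 2.3 : ℝ) / (1 + 3) * ((2 + 3.4) / (1 + 5) * ((2 + 4.4) / (1 + 7) *
        ((2 + 6.1) / (1 + 11) * ((2 + 6.9) / (1 + 13) * ((2 + 8.4) / (1 + 17) *
        ((2 + 9.2) / (1 + 19) * ((2 + 10.6) / (1 + 23)))))))) := by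
        gcongr <;> exact Real.rpow_le_of_pow_le (m := 3) (n := 4) (by norm_num) (by norm_num)
          (by norm_num) (by norm_num) (by norm_num)
    _ ≤ 3 / 50 := by norm_num

theorem prod_first_odd_primes_sqrt_le :
    ∏ p ∈ ({3, 5, 7, 11, 13, 17, 19, 23} : Finset ℕ), (2 + (p : ℝ) ^ ((1 : ℝ) / 2)) / (1 + p) ≤
      1 / 400 := by
  simp only [mem_insert, mem_singleton, Nat.reduceEqDiff, or_self, not_false_eq_true, prod_insert,
    prod_singleton]
  push_cast
  calc _ ≤ (2 + 1.8 : ℝ) / (1 + 3) * ((2 + 2.3) / (1 + 5) * ((2 + 2.7) / (1 + 7) *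
        ((2 + 3.4) / (1 + 11) * ((2 + 3.7) / (1 + 13) * ((2 + 4.2) / (1 + 17) *
        ((2 + 4.4) / (1 + 19) * ((2 + 4.8) / (1 + 23)))))))) := by
        gcongr <;> exact Real.rpow_le_of_pow_le (m := 1) (n := 2) (by norm_num) (by norm_num)
          (by norm_num) (by norm_num) (by norm_num)
    _ ≤ 1 / 400 := by norm_num

theorem key_inequality_omega_ge_eight_general (N : ℕ) (hodd : Odd N)
    (hω : 8 ≤ N.primeFactors.card) :
    10 / (3 * Real.pi) *
        ((∏ p ∈ N.primeFactors, (2 + (p : ℝ) ^ ((3 : ℝ) / 4)) / (1 + (p : ℝ))) +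
          3 * ∏ p ∈ N.primeFactors, (2 + (p : ℝ) ^ ((1 : ℝ) / 2)) / (1 + (p : ℝ))) <
      1 / 12 := by
  have hS : ∀ p ∈ N.primeFactors, p.Prime ∧ Odd p := fun p hp =>
    ⟨Nat.prime_of_mem_primeFactors hp, hodd.of_dvd_nat (Nat.dvd_of_mem_primeFactors hp)⟩
  have hA := (prod_add_rpow_div_le_prod_first_odd_primes (by norm_num) hS hω).trans
    prod_first_odd_primes_rpow_three_quarters_le
  have hB := (prod_add_rpow_div_le_prod_first_odd_primes (by norm_num) hS hω).trans
    prod_first_odd_primes_sqrt_le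
  calc _ ≤ 10 / (3 * 3) * (3 / 50 + 3 * (1 / 400) : ℝ) := by
        gcongr
        exact Real.pi_gt_three.le
    _ < 1 / 12 := by norm_num

/-- For an odd squarefree integer `N` with at least `8` distinct prime factors, the key
inequality `(10/(3π)) (∏_{p ∣ N} (2 + p^{3/4})/(1+p) + 3 ∏_{p ∣ N} (2 + p^{1/2})/(1+p)) < 1/12`
holds. -/
theorem key_inequality_omega_ge_eight (N : ℕ) (hodd : Odd N) (hsf : Squarefree N)
    (hω : 8 ≤ N.primeFactors.card) :
    10 / (3 * Real.pi) *
        ((∏ p ∈ N.primeFactors, (2 + (p : ℝ) ^ ((3 : ℝ) / 4)) / (1 + (p : ℝ))) +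
          3 * ∏ p ∈ N.primeFactors, (2 + (p : ℝ) ^ ((1 : ℝ) / 2)) / (1 + (p : ℝ))) <
      1 / 12 :=
  key_inequality_omega_ge_eight_general N hodd hω
end

section
/- Let N be an odd squarefree integer with ω(N) = 6 such that the smallest prime factor of N is at least 7 or the largest prime factor of N is greater than 569. Then (10/(3π)) · ( ∏_{p prime, p ∣ N} (2 + p^{3/4})/(1 + p) + 3 · ∏_{p prime, p ∣ N} (2 + p^{1/2})/(1 + p) ) < 1/12. -/
/-!
Write `f_r(x) = (2 + x ^ r) / (1 + x)`. For `r ≤ 1` the factor `f_r` decreases on `[1, ∞)`,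
so a product of `f_r` over `k` primes exceeding `b` is at most its product over the `k`
consecutive primes following `b`. If every prime factor is at least `7`, this bounds both
products by their values at `7, 11, 13, 17, 19, 23`. Otherwise some prime factor `q` exceeds
`569`, so `f_r(q) ≤ f_r(570)`, and the remaining five odd primes contribute at most the
values at `3, 5, 7, 11, 13`.
-/

open Finset

noncomputable def localFactor (r x : ℝ) : ℝ := (2 + x ^ r) / (1 + x)

noncomputable def keySum (S : Finset ℕ) : ℝ :=
  10 / (3 * Real.pi) *
    ((∏ p ∈ S, localFactor (3 / 4) p) + 3 * ∏ p ∈ S, localFactor (1 / 2) p)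

theorem localFactor_nonneg (r : ℝ) {x : ℝ} (hx : 0 ≤ x) : 0 ≤ localFactor r x := by
  unfold localFactor; positivity

theorem localFactor_antitoneOn {r : ℝ} (hr : r ≤ 1) :
    AntitoneOn (localFactor r) (Set.Ici 1) := by
  intro x (hx : 1 ≤ x) y (hy : 1 ≤ y) hxy
  have hx0 : 0 < x := by linarith
  set u := x ^ (r - 1) with hu
  have hu1 : u ≤ 1 := Real.rpow_le_one_of_one_le_of_nonpos hx (by linarith)
  have hxr : x ^ r = u * x := by rw [hu, Real.rpow_sub_one hx0.ne', div_mul_cancel₀ _ hx0.ne']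
  have hyr : y ^ r ≤ u * y := by
    calc y ^ r = y ^ (r - 1) * y := by
          rw [Real.rpow_sub_one (by linarith), div_mul_cancel₀ _ (by linarith)]
      _ ≤ u * y := by gcongr; exact Real.rpow_le_rpow_of_nonpos hx0 hxy (by linarith)
  -- after clearing denominators and using `hxr`, `hyr`, what is left is `(2 - u) * (y - x) ≥ 0`
  unfold localFactor
  rw [div_le_div_iff₀ (by linarith) (by linarith), hxr]
  nlinarith [mul_le_mul_of_nonneg_right hyr (by linarith : (0 : ℝ) ≤ 1 + x)]

theorem localFactor_natCast_le {r : ℝ} (hr : r ≤ 1) {m n : ℕ} (hm : 0 < m) (hmn : m ≤ n) :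
    localFactor r n ≤ localFactor r m :=
  localFactor_antitoneOn hr (Set.mem_Ici.mpr (by exact_mod_cast hm))
    (Set.mem_Ici.mpr (by exact_mod_cast hm.trans_le hmn)) (by exact_mod_cast hmn)

theorem localFactor_le_of_pow_le {r x c : ℝ} {m n : ℕ} (hn : n ≠ 0) (hr : r * n = m)
    (hx : 0 ≤ x) (hc : 2 ≤ c * (1 + x)) (h : x ^ m ≤ (c * (1 + x) - 2) ^ n) :
    localFactor r x ≤ c := by
  have hxr : x ^ r ≤ c * (1 + x) - 2 := by
    rwa [← pow_le_pow_iff_left₀ (by positivity) (by linarith) hn, ← Real.rpow_mul_natCast hx, hr,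
      Real.rpow_natCast]
  unfold localFactor
  rw [div_le_iff₀ (by linarith)]
  linarith

/-- The chain condition says that each entry of `L` is at most the first element of `P` after
its predecessor; hence the `i`-th smallest element of `S` is at least the `i`-th entry of `L`. -/
theorem prod_le_prod_of_isChain {P : ℕ → Prop} {f : ℕ → ℝ} (hf0 : 0 ≤ f) (L : List ℕ) :
    ∀ (b : ℕ) (S : Finset ℕ), AntitoneOn f (Set.Ioi b) →
      (b :: L).IsChain (fun a c => a < c ∧ ∀ p ∈ Ioo a c, ¬ P p) →
      (∀ p ∈ S, P p ∧ b < p) → #S = L.length → ∏ p ∈ S, f p ≤ (L.map f).prod := by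
  induction L with
  | nil =>
    intro b S _ _ _ hcard
    simp [card_eq_zero.mp hcard]
  | cons c L ih =>
    intro b S hf hchain hS hcard
    obtain ⟨⟨hbc, hgap⟩, hchain⟩ := List.isChain_cons_cons.mp hchain
    have hne : S.Nonempty := card_pos.mp (by simp [hcard])
    set m := S.min' hne
    have hmS : m ∈ S := S.min'_mem hne
    have hcm : c ≤ m := by
      by_contra! hmc
      exact hgap m (mem_Ioo.mpr ⟨(hS m hmS).2, hmc⟩) (hS m hmS).1
    have hfm : f m ≤ f c := hf (Set.mem_Ioi.mpr hbc) (hbc.trans_le hcm) hcm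
    have hrest : ∏ p ∈ S.erase m, f p ≤ (L.map f).prod := by
      refine ih c _ (hf.mono (Set.Ioi_subset_Ioi hbc.le)) hchain
        (fun p hp => ⟨(hS p (mem_of_mem_erase hp)).1, ?_⟩) (by simp [card_erase_of_mem hmS, hcard])
      exact hcm.trans_lt ((S.min'_le p (mem_of_mem_erase hp)).lt_of_ne (ne_of_mem_erase hp).symm)
    rw [← mul_prod_erase S f hmS, List.map_cons, List.prod_cons]
    exact mul_le_mul hfm hrest (prod_nonneg fun p _ => hf0 p) (hf0 c)

theorem prod_localFactor_le_of_isChain {r : ℝ} (hr : r ≤ 1) {L : List ℕ} {b : ℕ} {S : Finset ℕ}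
    (hchain : (b :: L).IsChain (fun a c => a < c ∧ ∀ p ∈ Ioo a c, ¬ p.Prime))
    (hS : ∀ p ∈ S, p.Prime ∧ b < p) (hcard : #S = L.length) :
    ∏ p ∈ S, localFactor r p ≤ (L.map fun p : ℕ => localFactor r p).prod :=
  prod_le_prod_of_isChain (fun p => localFactor_nonneg r p.cast_nonneg) L b S
    (fun m (hm : b < m) _ _ hmn => localFactor_natCast_le hr hm.pos hmn) hchain hS hcard

/-! The constants are the individual factors rounded up; `localFactor_le_of_pow_le` certifies
each of them by comparing integer powers. -/

theorem prod_localFactor_three_quarters_from_seven_le :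
    ([7, 11, 13, 17, 19, 23].map fun p : ℕ => localFactor (3 / 4) p).prod ≤ 0.0557 := by
  simp only [List.map_cons, List.map_nil, List.prod_cons, List.prod_nil, mul_one, Nat.cast_ofNat,
    localFactor]
  calc _ ≤ (0.788 : ℝ) * (0.6701 * (0.6319 * (0.5763 * (0.5551 * 0.521)))) := by
        gcongr
        all_goals apply localFactor_le_of_pow_le (m := 3) (n := 4) <;> norm_num
    _ ≤ 0.0557 := by norm_num

theorem prod_localFactor_half_from_seven_le :
    ([7, 11, 13, 17, 19, 23].map fun p : ℕ => localFactor (1 / 2) p).prod ≤ 0.00316 := by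
  simp only [List.map_cons, List.map_nil, List.prod_cons, List.prod_nil, mul_one, Nat.cast_ofNat,
    localFactor]
  calc _ ≤ (0.5808 : ℝ) * (0.4431 * (0.4004 * (0.3402 * (0.318 * 0.2832)))) := by
        gcongr
        all_goals apply localFactor_le_of_pow_le (m := 1) (n := 2) <;> norm_num
    _ ≤ 0.00316 := by norm_num

theorem prod_localFactor_three_quarters_from_three_le :
    ([3, 5, 7, 11, 13].map fun p : ℕ => localFactor (3 / 4) p).prod ≤ 0.318 := by
  simp only [List.map_cons, List.map_nil, List.prod_cons, List.prod_nil, mul_one, Nat.cast_ofNat,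
    localFactor]
  calc _ ≤ (1.0699 : ℝ) * (0.8907 * (0.788 * (0.6701 * 0.6319))) := by
        gcongr
        all_goals apply localFactor_le_of_pow_le (m := 3) (n := 4) <;> norm_num
    _ ≤ 0.318 := by norm_num

theorem prod_localFactor_half_from_three_le :
    ([3, 5, 7, 11, 13].map fun p : ℕ => localFactor (1 / 2) p).prod ≤ 0.0679 := by
  simp only [List.map_cons, List.map_nil, List.prod_cons, List.prod_nil, mul_one, Nat.cast_ofNat,
    localFactor]
  calc _ ≤ (0.9331 : ℝ) * (0.7061 * (0.5808 * (0.4431 * 0.4004))) := by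
        gcongr
        all_goals apply localFactor_le_of_pow_le (m := 1) (n := 2) <;> norm_num
    _ ≤ 0.0679 := by norm_num

theorem localFactor_three_quarters_570_le : localFactor (3 / 4) 570 ≤ 0.2079 := by
  apply localFactor_le_of_pow_le (m := 3) (n := 4) <;> norm_num

theorem localFactor_half_570_le : localFactor (1 / 2) 570 ≤ 0.0454 := by
  apply localFactor_le_of_pow_le (m := 1) (n := 2) <;> norm_num

theorem keySum_lt_of_le {S : Finset ℕ} {a b : ℝ} (ha : ∏ p ∈ S, localFactor (3 / 4) p ≤ a)
    (hb : ∏ p ∈ S, localFactor (1 / 2) p ≤ b) (hab : 10 / (3 * 3.14) * (a + 3 * b) < 1 / 12) :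
    keySum S < 1 / 12 := by
  have h0 : 0 ≤ ∏ p ∈ S, localFactor (3 / 4) p + 3 * ∏ p ∈ S, localFactor (1 / 2) p := by
    have := prod_nonneg (s := S) fun p _ => localFactor_nonneg (3 / 4) p.cast_nonneg
    have := prod_nonneg (s := S) fun p _ => localFactor_nonneg (1 / 2) p.cast_nonneg
    positivity
  calc keySum S ≤ 10 / (3 * 3.14) * (a + 3 * b) := by
        unfold keySum
        gcongr 10 / (3 * ?_) * ?_
        · exact Real.pi_gt_d2.le
        · linarith
    _ < 1 / 12 := hab

theorem keySum_lt_of_primes_gt_five {S : Finset ℕ} (hS : ∀ p ∈ S, p.Prime ∧ 5 < p)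
    (hcard : #S = 6) : keySum S < 1 / 12 :=
  keySum_lt_of_le
    ((prod_localFactor_le_of_isChain (by norm_num) (by decide) hS (by simp [hcard])).trans
      prod_localFactor_three_quarters_from_seven_le)
    ((prod_localFactor_le_of_isChain (by norm_num) (by decide) hS (by simp [hcard])).trans
      prod_localFactor_half_from_seven_le)
    (by norm_num)

theorem keySum_lt_of_primes_gt_two_of_mem_ge {S : Finset ℕ} (hS : ∀ p ∈ S, p.Prime ∧ 2 < p)
    (hcard : #S = 6) {q : ℕ} (hqS : q ∈ S) (hq : 570 ≤ q) : keySum S < 1 / 12 := by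
  have hS' : ∀ p ∈ S.erase q, p.Prime ∧ 2 < p := fun p hp => hS p (mem_of_mem_erase hp)
  have hcard' : #(S.erase q) = [3, 5, 7, 11, 13].length := by simp [card_erase_of_mem hqS, hcard]
  have hsplit {r : ℝ} (hr : r ≤ 1) {c d : ℝ} (hc : localFactor r 570 ≤ c)
      (hd : ([3, 5, 7, 11, 13].map fun p : ℕ => localFactor r p).prod ≤ d) :
      ∏ p ∈ S, localFactor r p ≤ c * d := by
    rw [← mul_prod_erase S _ hqS]
    exact mul_le_mul ((localFactor_natCast_le hr (by norm_num) hq).trans hc)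
      ((prod_localFactor_le_of_isChain hr (by decide) hS' hcard').trans hd)
      (prod_nonneg fun (p : ℕ) _ => localFactor_nonneg r p.cast_nonneg)
      ((localFactor_nonneg r (by norm_num)).trans hc)
  exact keySum_lt_of_le
    (hsplit (by norm_num) localFactor_three_quarters_570_le
      prod_localFactor_three_quarters_from_three_le)
    (hsplit (by norm_num) localFactor_half_570_le prod_localFactor_half_from_three_le)
    (by norm_num)

theorem two_lt_of_mem_primeFactors_of_odd {N p : ℕ} (hN : Odd N) (hp : p ∈ N.primeFactors) :
    2 < p :=
  (Nat.prime_of_mem_primeFactors hp).two_le.lt_of_ne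
    (hN.ne_two_of_dvd_nat (Nat.dvd_of_mem_primeFactors hp)).symm

theorem key_inequality_omega_eq_6_general (N : ℕ) (hodd : Odd N)
    (hω : N.primeFactors.card = 6)
    (hP : (∀ p ∈ N.primeFactors, 7 ≤ p) ∨ (∃ p ∈ N.primeFactors, 569 < p)) :
    10 / (3 * Real.pi) *
        ((∏ p ∈ N.primeFactors, (2 + (p : ℝ) ^ ((3 : ℝ) / 4)) / (1 + (p : ℝ))) +
          3 * ∏ p ∈ N.primeFactors, (2 + (p : ℝ) ^ ((1 : ℝ) / 2)) / (1 + (p : ℝ))) <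
      1 / 12 := by
  change keySum N.primeFactors < 1 / 12
  rcases hP with hsmall | ⟨q, hq, hq569⟩
  · exact keySum_lt_of_primes_gt_five
      (fun p hp => ⟨Nat.prime_of_mem_primeFactors hp, (hsmall p hp).trans_lt' (by norm_num)⟩) hω
  · exact keySum_lt_of_primes_gt_two_of_mem_ge
      (fun p hp => ⟨Nat.prime_of_mem_primeFactors hp, two_lt_of_mem_primeFactors_of_odd hodd hp⟩)
      hω hq hq569

/-- For an odd squarefree integer `N` with exactly `6` distinct prime factors whose smallest
prime factor is at least `7` or whose largest prime factor is greater than `569`, the key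
inequality holds. -/
theorem key_inequality_omega_eq_6 (N : ℕ) (hodd : Odd N) (hsf : Squarefree N)
    (hω : N.primeFactors.card = 6)
    (hP : (∀ p ∈ N.primeFactors, 7 ≤ p) ∨ (∃ p ∈ N.primeFactors, 569 < p)) :
    10 / (3 * Real.pi) *
        ((∏ p ∈ N.primeFactors, (2 + (p : ℝ) ^ ((3 : ℝ) / 4)) / (1 + (p : ℝ))) +
          3 * ∏ p ∈ N.primeFactors, (2 + (p : ℝ) ^ ((1 : ℝ) / 2)) / (1 + (p : ℝ))) <
      1 / 12 :=
  key_inequality_omega_eq_6_general N hodd hω hP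
end

section
/- Let N be an odd squarefree integer with ω(N) = 4 such that the smallest prime factor of N is at least 23 or the largest prime factor of N is greater than 16573. Then (10/(3π)) · ( ∏_{p prime, p ∣ N} (2 + p^{3/4})/(1 + p) + 3 · ∏_{p prime, p ∣ N} (2 + p^{1/2})/(1 + p) ) < 1/12. -/
open Finset

/-! For `r ≤ 1` the factor `(2 + x ^ r) / (1 + x)` decreases on `[1, ∞)`, so a product of it over
distinct odd numbers is largest when they are packed as low as allowed: `23, 25, 27, 29` in the
first case, and `3, 5, 7` together with `16574` in the second. Bounding `x ^ (3/4)` and `x ^ (1/2)`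
at these eight points by decimals, and `π` from below by `3.14`, leaves a numerical check. -/

theorem prod_le_prod_range_of_odd {R : Type*} [CommSemiring R] [PartialOrder R]
    [IsOrderedRing R] {f : ℕ → R} {a : ℕ} (hf0 : ∀ n, 0 ≤ f n)
    (hf : AntitoneOn f (Set.Ici a)) {s : Finset ℕ} (hodd : ∀ n ∈ s, Odd n)
    (ha : ∀ n ∈ s, a ≤ n) : ∏ n ∈ s, f n ≤ ∏ i ∈ range #s, f (a + 2 * i) := by
  induction hk : #s generalizing s a with
  | zero => simp_all
  | succ k ih =>
    have hne : s.Nonempty := card_pos.1 (by omega)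
    set m := s.min' hne
    have hm : m ∈ s := s.min'_mem hne
    have hrest (n : ℕ) (hn : n ∈ s.erase m) : a + 2 ≤ n := by
      obtain ⟨hnm, hns⟩ := mem_erase.1 hn
      obtain ⟨i, rfl⟩ := hodd n hns
      obtain ⟨j, hj⟩ := hodd m hm
      have := s.min'_le _ hns
      have := ha m hm
      omega
    have hrest_le : ∏ n ∈ s.erase m, f n ≤ ∏ i ∈ range k, f (a + 2 + 2 * i) :=
      ih (hf.mono (Set.Ici_subset_Ici.2 (by omega))) (fun n hn => hodd n (mem_of_mem_erase hn))
        hrest (by rw [card_erase_of_mem hm, hk]; rfl)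
    have hshift (i : ℕ) : a + 2 * (i + 1) = a + 2 + 2 * i := by ring
    rw [← mul_prod_erase s f hm, prod_range_succ', mul_comm, mul_zero, add_zero]
    simp only [hshift]
    exact mul_le_mul hrest_le (hf Set.self_mem_Ici (ha m hm) (ha m hm))
      (hf0 _) (prod_nonneg fun _ _ => hf0 _)

theorem rpow_div_le_of_pow_le {x t : ℝ} {m n : ℕ} (hx : 0 ≤ x) (ht : 0 ≤ t) (hn : n ≠ 0)
    (h : x ^ m ≤ t ^ n) : x ^ ((m : ℝ) / n) ≤ t := by
  rw [div_eq_mul_inv, Real.rpow_mul hx, Real.rpow_natCast,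
    Real.rpow_inv_le_iff_of_pos (by positivity) ht (by positivity)]
  exact_mod_cast h

noncomputable def keyFactor (r x : ℝ) : ℝ := (2 + x ^ r) / (1 + x)

theorem keyFactor_nonneg (r : ℝ) {x : ℝ} (hx : 0 ≤ x) : 0 ≤ keyFactor r x := by
  unfold keyFactor; positivity

theorem keyFactor_antitoneOn {r : ℝ} (hr : r ≤ 1) : AntitoneOn (keyFactor r) (Set.Ici 1) := by
  intro x hx y hy hxy
  simp only [Set.mem_Ici] at hx hy
  have hx0 : 0 < x := by linarith
  have hxr : x ^ r ≤ x := Real.rpow_le_self_of_one_le hx hr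
  -- `t ↦ t ^ (r - 1)` is antitone, i.e. `x * y ^ r ≤ y * x ^ r`
  have hcross : x * y ^ r ≤ y * x ^ r := by
    have h := Real.rpow_le_rpow_of_nonpos hx0 hxy (sub_nonpos.2 hr)
    rw [Real.rpow_sub_one (by positivity), Real.rpow_sub_one hx0.ne'] at h
    rwa [div_le_div_iff₀ (by linarith) hx0, mul_comm, mul_comm (x ^ r)] at h
  unfold keyFactor
  rw [div_le_div_iff₀ (by linarith) (by linarith)]
  -- with `u = y ^ r`, `v = x ^ r` the goal reduces to `u - v ≤ y - x`, and
  -- `x * (u - v) ≤ y * v - x * v ≤ x * (y - x)` by `hcross` and `hxr`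
  nlinarith [mul_nonneg (sub_nonneg.2 hxr) (sub_nonneg.2 hxy)]

theorem keyFactor_three_quarters_le {x : ℝ} (t : ℝ) (hx : 0 ≤ x) (ht : 0 ≤ t)
    (h : x ^ 3 ≤ t ^ 4) : keyFactor (3 / 4) x ≤ (2 + t) / (1 + x) := by
  have := rpow_div_le_of_pow_le (m := 3) (n := 4) hx ht (by norm_num) h
  unfold keyFactor
  gcongr
  exact_mod_cast this

theorem keyFactor_half_le {x : ℝ} (t : ℝ) (hx : 0 ≤ x) (ht : 0 ≤ t)
    (h : x ≤ t ^ 2) : keyFactor (1 / 2) x ≤ (2 + t) / (1 + x) := by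
  have := rpow_div_le_of_pow_le (m := 1) (n := 2) hx ht (by norm_num) (by simpa using h)
  unfold keyFactor
  gcongr
  exact_mod_cast this

theorem keyFactor_natCast_antitoneOn {r : ℝ} (hr : r ≤ 1) {a : ℕ} (ha : 1 ≤ a) :
    AntitoneOn (fun n : ℕ => keyFactor r n) (Set.Ici a) := fun m hm n hn hmn =>
  keyFactor_antitoneOn hr (Set.mem_Ici.2 (by exact_mod_cast ha.trans hm))
    (Set.mem_Ici.2 (by exact_mod_cast ha.trans hn)) (by exact_mod_cast hmn)

theorem prod_keyFactor_le {r : ℝ} (hr : r ≤ 1) {a : ℕ} (ha : 1 ≤ a) {s : Finset ℕ}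
    (hodd : ∀ n ∈ s, Odd n) (has : ∀ n ∈ s, a ≤ n) :
    ∏ n ∈ s, keyFactor r n ≤ ∏ i ∈ range #s, keyFactor r ↑(a + 2 * i) :=
  prod_le_prod_range_of_odd (fun n => keyFactor_nonneg r n.cast_nonneg)
    (keyFactor_natCast_antitoneOn hr ha) hodd has

theorem prod_keyFactor_le_of_mem {r : ℝ} (hr : r ≤ 1) {a b q : ℕ} (ha : 1 ≤ a) (hb : 1 ≤ b)
    {s : Finset ℕ} (hodd : ∀ n ∈ s, Odd n) (has : ∀ n ∈ s, a ≤ n) (hq : q ∈ s) (hbq : b ≤ q) :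
    ∏ n ∈ s, keyFactor r n ≤ (∏ i ∈ range (#s - 1), keyFactor r ↑(a + 2 * i)) * keyFactor r b := by
  rw [← prod_erase_mul s _ hq, ← card_erase_of_mem hq]
  exact mul_le_mul
    (prod_keyFactor_le hr ha (fun n hn => hodd n (mem_of_mem_erase hn))
      (fun n hn => has n (mem_of_mem_erase hn)))
    (keyFactor_natCast_antitoneOn hr hb Set.self_mem_Ici hbq hbq)
    (keyFactor_nonneg r q.cast_nonneg)
    (prod_nonneg fun i _ => keyFactor_nonneg r (a + 2 * i).cast_nonneg)

noncomputable def keyBracket (s : Finset ℕ) : ℝ :=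
  ∏ p ∈ s, keyFactor (3 / 4) p + 3 * ∏ p ∈ s, keyFactor (1 / 2) p

theorem keyBracket_lt_of_forall_ge {s : Finset ℕ} (hcard : #s = 4) (hodd : ∀ n ∈ s, Odd n)
    (hs : ∀ n ∈ s, 23 ≤ n) : keyBracket s < 0.0785 := by
  have h34 := prod_keyFactor_le (by norm_num : (3 / 4 : ℝ) ≤ 1) (by norm_num) hodd hs
  have h12 := prod_keyFactor_le (by norm_num : (1 / 2 : ℝ) ≤ 1) (by norm_num) hodd hs
  norm_num [hcard, prod_range_succ] at h34 h12
  calc keyBracket s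
      ≤ (2 + 10.503) / (1 + 23) * ((2 + 11.181) / (1 + 25)) * ((2 + 11.845) / (1 + 27)) *
            ((2 + 12.497) / (1 + 29)) +
          3 * ((2 + 4.796) / (1 + 23) * ((2 + 5) / (1 + 25)) * ((2 + 5.197) / (1 + 27)) *
            ((2 + 5.386) / (1 + 29))) := by
        refine add_le_add (h34.trans ?_) (mul_le_mul_of_nonneg_left (h12.trans ?_) (by norm_num))
        all_goals gcongr ?_ * ?_ * ?_ * ?_
        all_goals first
          | exact keyFactor_nonneg _ (by norm_num)
          | exact keyFactor_three_quarters_le _ (by norm_num) (by norm_num) (by norm_num)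
          | exact keyFactor_half_le _ (by norm_num) (by norm_num) (by norm_num)
    _ < 0.0785 := by norm_num

theorem keyBracket_lt_of_mem_gt {s : Finset ℕ} (hcard : #s = 4) (hodd : ∀ n ∈ s, Odd n)
    (hs : ∀ n ∈ s, 3 ≤ n) {q : ℕ} (hq : q ∈ s) (hq_large : 16573 < q) : keyBracket s < 0.0785 := by
  have h34 := prod_keyFactor_le_of_mem (by norm_num : (3 / 4 : ℝ) ≤ 1) (by norm_num)
    (by norm_num) hodd hs hq hq_large
  have h12 := prod_keyFactor_le_of_mem (by norm_num : (1 / 2 : ℝ) ≤ 1) (by norm_num)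
    (by norm_num) hodd hs hq hq_large
  norm_num [hcard, prod_range_succ] at h34 h12
  calc keyBracket s
      ≤ (2 + 2.28) / (1 + 3) * ((2 + 3.344) / (1 + 5)) * ((2 + 4.304) / (1 + 7)) *
            ((2 + 1461) / (1 + 16574)) +
          3 * ((2 + 1.733) / (1 + 3) * ((2 + 2.237) / (1 + 5)) * ((2 + 2.646) / (1 + 7)) *
            ((2 + 129) / (1 + 16574))) := by
        refine add_le_add (h34.trans ?_) (mul_le_mul_of_nonneg_left (h12.trans ?_) (by norm_num))
        all_goals gcongr ?_ * ?_ * ?_ * ?_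
        all_goals first
          | exact keyFactor_nonneg _ (by norm_num)
          | exact keyFactor_three_quarters_le _ (by norm_num) (by norm_num) (by norm_num)
          | exact keyFactor_half_le _ (by norm_num) (by norm_num) (by norm_num)
    _ < 0.0785 := by norm_num

theorem key_inequality_omega_eq_4_general (N : ℕ) (hodd : Odd N)
    (hω : N.primeFactors.card = 4)
    (hP : (∀ p ∈ N.primeFactors, 23 ≤ p) ∨ (∃ p ∈ N.primeFactors, 16573 < p)) :
    10 / (3 * Real.pi) *
        ((∏ p ∈ N.primeFactors, (2 + (p : ℝ) ^ ((3 : ℝ) / 4)) / (1 + (p : ℝ))) +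
          3 * ∏ p ∈ N.primeFactors, (2 + (p : ℝ) ^ ((1 : ℝ) / 2)) / (1 + (p : ℝ))) <
      1 / 12 := by
  have hodd_p (p : ℕ) (hp : p ∈ N.primeFactors) : Odd p :=
    hodd.of_dvd_nat (Nat.dvd_of_mem_primeFactors hp)
  have hbracket : keyBracket N.primeFactors < 0.0785 := by
    rcases hP with hsmall | ⟨q, hq, hq_large⟩
    · exact keyBracket_lt_of_forall_ge hω hodd_p hsmall
    · refine keyBracket_lt_of_mem_gt hω hodd_p (fun p hp => ?_) hq hq_large
      obtain ⟨k, rfl⟩ := hodd_p p hp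
      have := (Nat.prime_of_mem_primeFactors hp).two_le
      omega
  -- `0.0785 = 3.14 / 40`
  have hπ := Real.pi_gt_d2
  rw [div_mul_eq_mul_div, div_lt_iff₀ (by positivity)]
  change 10 * keyBracket N.primeFactors < 1 / 12 * (3 * Real.pi)
  linarith

/-- For an odd squarefree integer `N` with exactly `4` distinct prime factors whose smallest
prime factor is at least `23` or whose largest prime factor is greater than `16573`, the key
inequality holds. -/
theorem key_inequality_omega_eq_4 (N : ℕ) (hodd : Odd N) (hsf : Squarefree N)
    (hω : N.primeFactors.card = 4)
    (hP : (∀ p ∈ N.primeFactors, 23 ≤ p) ∨ (∃ p ∈ N.primeFactors, 16573 < p)) :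
    10 / (3 * Real.pi) *
        ((∏ p ∈ N.primeFactors, (2 + (p : ℝ) ^ ((3 : ℝ) / 4)) / (1 + (p : ℝ))) +
          3 * ∏ p ∈ N.primeFactors, (2 + (p : ℝ) ^ ((1 : ℝ) / 2)) / (1 + (p : ℝ))) <
      1 / 12 :=
  key_inequality_omega_eq_4_general N hodd hω hP
end
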